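/- For a ∈ ℕ, the identity (1−z)^a · P^{λ−1, −2λ−2a+1}_a((3+z)/(1−z)) = (−1)^a · ((λ+[a/2])_{[(a+1)/2]}/(λ−1/2)_{[(a+1)/2]}) · C^{λ−1/2}_a(z) holds as an identity of rational functions in λ and polynomials in z. -/

import Mathlib

noncomputable section
open Finset

/-- Generalized binomial coefficient `C(μ, k) = μ(μ−1)⋯(μ−k+1)/k!`. -/
def gbinom (μ : ℂ) (k : ℕ) : ℂ := (∏ i ∈ Finset.range k, (μ - i)) / (k.factorial : ℂ)

/-- Pochhammer symbol `(z)_k = z(z+1)⋯(z+k−1)`. -/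
def poch (z : ℂ) (k : ℕ) : ℂ := ∏ i ∈ Finset.range k, (z + i)

/-- The Rankin–Cohen polynomial
`RC^{λ₁,λ₂}_a(x,y) = Σ_{ℓ=0}^{a} (−1)^ℓ C(λ₁+a−1, ℓ) C(λ₂+a−1, a−ℓ) x^{a−ℓ} y^ℓ`. -/
def RC (a : ℕ) (l1 l2 x y : ℂ) : ℂ :=
  ∑ ℓ ∈ Finset.range (a + 1),
    (-1 : ℂ) ^ ℓ * gbinom (l1 + a - 1) ℓ * gbinom (l2 + a - 1) (a - ℓ) * x ^ (a - ℓ) * y ^ ℓ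

/-- The Jacobi polynomial `P^{α,β}_ℓ(t)`, written via Pochhammer symbols:
`P^{α,β}_ℓ(t) = Σ_m (α+m+1)_{ℓ−m}/(ℓ−m)! · (α+β+ℓ+1)_m/m! · ((t−1)/2)^m`. -/
def jacobiP (α β : ℂ) (ℓ : ℕ) (t : ℂ) : ℂ :=
  ∑ m ∈ Finset.range (ℓ + 1),
    poch (α + m + 1) (ℓ - m) / ((ℓ - m).factorial : ℂ) *
      (poch (α + β + ℓ + 1) m / (m.factorial : ℂ)) * ((t - 1) / 2) ^ m

/-- The homogenized (two-variable) Jacobi polynomial `P^{α,β}_ℓ(x,y) = y^ℓ P^{α,β}_ℓ(2x/y+1)`. -/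
def jacobiP2 (α β : ℂ) (ℓ : ℕ) (x y : ℂ) : ℂ :=
  ∑ m ∈ Finset.range (ℓ + 1),
    poch (α + m + 1) (ℓ - m) / ((ℓ - m).factorial : ℂ) *
      (poch (α + β + ℓ + 1) m / (m.factorial : ℂ)) * x ^ m * y ^ (ℓ - m)

/-- The Gegenbauer polynomial
`C^α_ℓ(t) = Σ_{k=0}^{[ℓ/2]} (−1)^k (α)_{ℓ−k}/((ℓ−2k)! k!) (2t)^{ℓ−2k}`. -/
def gegen (α : ℂ) (ℓ : ℕ) (t : ℂ) : ℂ :=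
  ∑ k ∈ Finset.range (ℓ / 2 + 1),
    (-1 : ℂ) ^ k * poch α (ℓ - k) / (((ℓ - 2 * k).factorial : ℂ) * (k.factorial : ℂ)) *
      (2 * t) ^ (ℓ - 2 * k)

/-- The two-variable Gegenbauer polynomial `C^α_ℓ(s,t) = s^{ℓ/2} C^α_ℓ(t/√s)`. -/
def gegen2 (α : ℂ) (ℓ : ℕ) (s t : ℂ) : ℂ :=
  ∑ k ∈ Finset.range (ℓ / 2 + 1),
    (-1 : ℂ) ^ k * poch α (ℓ - k) / (((ℓ - 2 * k).factorial : ℂ) * (k.factorial : ℂ)) *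
      s ^ k * (2 * t) ^ (ℓ - 2 * k)

/-- Gegenbauer polynomial with integer index, with the convention `C^α_{−1} := 0`. -/
def gegenZ (α : ℂ) (n : ℤ) (t : ℂ) : ℂ := if n < 0 then 0 else gegen α n.toNat t

/-- Two-variable Gegenbauer polynomial with integer index, `C^α_{−1} := 0`. -/
def gegen2Z (α : ℂ) (n : ℤ) (s t : ℂ) : ℂ := if n < 0 then 0 else gegen2 α n.toNat s t

/-! With `c = λ + a - 1`, the left-hand side is `(-1)^a Σ_m C(c,m) C(c,a-m) (z+1)^m (z-1)^(a-m)`,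
the coefficient of `t^a` in `((1 + (z+1)t)(1 + (z-1)t))^c = ((1 + zt)^2 - t^2)^c`. Expanding the
latter binomially gives `Σ_j (-1)^j C(c,j) C(2c-2j, a-2j) z^(a-2j)`. For arbitrary `c` this is a
polynomial identity in `c`, so it suffices to check it at the natural numbers, where the generating
functions are honest polynomials. The duplication formula for falling factorials,
`(2y)↓ₙ = 2^n (y)↓_⌈n/2⌉ (y - 1/2)↓_⌊n/2⌋`, then matches the sum term by term with the defining
sum of `C^{λ-1/2}_a`. -/

section

open Polynomial
open scoped Nat

lemma descPochhammer_eval_add {R : Type*} [CommRing R] (x : R) (p q : ℕ) :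
    (descPochhammer R (p + q)).eval x =
      (descPochhammer R p).eval x * (descPochhammer R q).eval (x - p) := by
  simp only [← descPochhammer_mul, eval_mul, eval_comp, eval_sub, eval_X, eval_natCast]

lemma descPochhammer_two_mul_eval_two_mul {K : Type*} [Field K] [CharZero K] (y : K) (k : ℕ) :
    (descPochhammer K (2 * k)).eval (2 * y) =
      4 ^ k * (descPochhammer K k).eval y * (descPochhammer K k).eval (y - 1 / 2) := by
  induction k with
  | zero => simp
  | succ k ih =>
    rw [Nat.mul_succ, descPochhammer_succ_eval, descPochhammer_succ_eval, ih,
      descPochhammer_succ_eval, descPochhammer_succ_eval]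
    push_cast
    ring

lemma descPochhammer_eval_two_mul {K : Type*} [Field K] [CharZero K] (y : K) (n : ℕ) :
    (descPochhammer K n).eval (2 * y) =
      2 ^ n * (descPochhammer K (n - n / 2)).eval y *
        (descPochhammer K (n / 2)).eval (y - 1 / 2) := by
  obtain ⟨k, rfl | rfl⟩ := Nat.even_or_odd' n
  · rw [descPochhammer_two_mul_eval_two_mul, show 2 * k - 2 * k / 2 = k by omega,
      show 2 * k / 2 = k by omega, pow_mul]
    norm_num
  · rw [descPochhammer_succ_eval, descPochhammer_two_mul_eval_two_mul,
      show 2 * k + 1 - (2 * k + 1) / 2 = k + 1 by omega, show (2 * k + 1) / 2 = k by omega,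
      descPochhammer_succ_eval, pow_succ, pow_mul]
    push_cast
    ring

lemma poch_eq_ascPochhammer_eval (x : ℂ) (k : ℕ) : poch x k = (ascPochhammer ℂ k).eval x := by
  induction k with
  | zero => simp [poch]
  | succ k ih => rw [poch, prod_range_succ, ← poch, ih, ascPochhammer_succ_eval]

lemma gbinom_eq_descPochhammer_eval_div (μ : ℂ) (k : ℕ) :
    gbinom μ k = (descPochhammer ℂ k).eval μ / k ! := by
  rw [gbinom, descPochhammer_eval_eq_prod_range]

lemma gbinom_natCast (n k : ℕ) : gbinom n k = n.choose k := by
  rw [gbinom_eq_descPochhammer_eval_div, descPochhammer_eval_eq_descFactorial,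
    Nat.descFactorial_eq_factorial_mul_choose, Nat.cast_mul,
    mul_div_cancel_left₀ _ (Nat.cast_ne_zero.2 (Nat.factorial_ne_zero k))]

lemma poch_add (x : ℂ) (p q : ℕ) : poch x (p + q) = poch x p * poch (x + p) q := by
  simp only [poch_eq_ascPochhammer_eval, ← ascPochhammer_mul, eval_mul, eval_comp, eval_add,
    eval_X, eval_natCast]

lemma descPochhammer_eval_eq_poch (x : ℂ) (k : ℕ) :
    (descPochhammer ℂ k).eval x = poch (x - k + 1) k := by
  rw [descPochhammer_eval_eq_ascPochhammer, poch_eq_ascPochhammer_eval]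

lemma poch_div_factorial (x : ℂ) (k : ℕ) : poch x k / k ! = gbinom (x + k - 1) k := by
  rw [gbinom_eq_descPochhammer_eval_div, descPochhammer_eval_eq_poch,
    show x + k - 1 - k + 1 = x by ring]

lemma poch_neg_div_factorial (x : ℂ) (k : ℕ) : poch (-x) k / k ! = (-1) ^ k * gbinom x k := by
  rw [gbinom_eq_descPochhammer_eval_div, poch_eq_ascPochhammer_eval,
    ascPochhammer_eval_neg_eq_descPochhammer, mul_div_assoc]

lemma coeff_one_add_C_mul_X_pow {R : Type*} [CommSemiring R] (u : R) (n k : ℕ) :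
    ((1 + C u * X) ^ n).coeff k = n.choose k * u ^ k := by
  have hterm (m : ℕ) : (C u * X) ^ m * 1 ^ (n - m) * (n.choose m : R[X]) =
      C (n.choose m * u ^ m) * X ^ m := by
    rw [mul_pow, one_pow, mul_one, ← C_pow, ← C_eq_natCast, C_mul]
    ring
  simp only [add_comm (1 : R[X]), add_pow, hterm, finsetSum_coeff, coeff_C_mul_X_pow]
  rw [sum_ite_eq]
  split_ifs with hk
  · rfl
  · rw [Nat.choose_eq_zero_of_lt (by simpa using hk), Nat.cast_zero, zero_mul]

lemma sum_choose_mul_choose_mul_add_pow_mul_sub_pow {R : Type*} [CommRing R] (n a : ℕ)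
    (x y : R) :
    ∑ m ∈ range (a + 1), (n.choose m * n.choose (a - m) : R) * (x + y) ^ m * (x - y) ^ (a - m) =
      ∑ j ∈ range (a / 2 + 1),
        (-1) ^ j * (n.choose j * (2 * (n - j)).choose (a - 2 * j) : R) * y ^ (2 * j) *
          x ^ (a - 2 * j) := by
  have hprod : (1 + C (x + y) * X) ^ n * (1 + C (x - y) * X) ^ n =
      (-(C y ^ 2 * X ^ 2) + (1 + C x * X) ^ 2) ^ n := by
    rw [← mul_pow, C_add, C_sub]
    ring
  have hterm (j : ℕ) :
      (-(C y ^ 2 * X ^ 2)) ^ j * ((1 + C x * X) ^ 2) ^ (n - j) * (n.choose j : R[X]) =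
        C ((-1) ^ j * n.choose j * y ^ (2 * j)) *
          (X ^ (2 * j) * (1 + C x * X) ^ (2 * (n - j))) := by
    simp only [C_mul, C_pow, C_neg, C_1, map_natCast, pow_mul]
    ring
  have hcoeff := congrArg (coeff · a) hprod
  rw [coeff_mul, Nat.sum_antidiagonal_eq_sum_range_succ (fun i j => coeff _ i * coeff _ j)]
    at hcoeff
  simp only [coeff_one_add_C_mul_X_pow] at hcoeff
  rw [add_pow] at hcoeff
  simp only [hterm, finsetSum_coeff, coeff_C_mul, coeff_X_pow_mul', coeff_one_add_C_mul_X_pow]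
    at hcoeff
  calc _ = _ := sum_congr rfl fun m _ => by ring
    _ = _ := hcoeff
    _ = ∑ j ∈ range (n + 1), if 2 * j ≤ a then
          (-1) ^ j * (n.choose j * (2 * (n - j)).choose (a - 2 * j) : R) * y ^ (2 * j) *
            x ^ (a - 2 * j) else 0 :=
        sum_congr rfl fun j _ => by split_ifs <;> ring
    _ = _ := by
      rw [← sum_filter]
      apply sum_subset
      · intro j
        simp only [mem_filter, mem_range]
        omega
      · intro j hja hj
        simp only [mem_filter, mem_range] at hja hj
        rw [Nat.choose_eq_zero_of_lt (by omega : n < j)]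
        simp

lemma natCast_choose_mul_gbinom_two_mul_sub (n j k : ℕ) :
    (n.choose j : ℂ) * gbinom (2 * n - 2 * j) k = n.choose j * (2 * (n - j)).choose k := by
  rcases le_or_gt j n with hjn | hjn
  · rw [← gbinom_natCast (2 * (n - j)), Nat.cast_mul, Nat.cast_sub hjn]
    push_cast
    congr 2
    ring
  · simp [Nat.choose_eq_zero_of_lt hjn]

lemma sum_gbinom_mul_gbinom_mul_add_pow_mul_sub_pow (c x y : ℂ) (a : ℕ) :
    ∑ m ∈ range (a + 1), gbinom c m * gbinom c (a - m) * (x + y) ^ m * (x - y) ^ (a - m) =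
      ∑ j ∈ range (a / 2 + 1),
        (-1) ^ j * (gbinom c j * gbinom (2 * c - 2 * j) (a - 2 * j)) * y ^ (2 * j) *
          x ^ (a - 2 * j) := by
  set Q : ℕ → ℂ[X] := fun k => C ((k ! : ℂ)⁻¹) * descPochhammer ℂ k
  set L : ℂ[X] := ∑ m ∈ range (a + 1), Q m * Q (a - m) * C ((x + y) ^ m * (x - y) ^ (a - m))
  set R : ℂ[X] := ∑ j ∈ range (a / 2 + 1),
    C ((-1) ^ j) * (Q j * (Q (a - 2 * j)).comp (2 * X - 2 * (j : ℂ[X]))) *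
      C (y ^ (2 * j) * x ^ (a - 2 * j))
  have hL (c : ℂ) : L.eval c =
      ∑ m ∈ range (a + 1), gbinom c m * gbinom c (a - m) * (x + y) ^ m * (x - y) ^ (a - m) := by
    simp only [L, Q, eval_finsetSum, eval_mul, eval_C, gbinom_eq_descPochhammer_eval_div]
    exact sum_congr rfl fun m _ => by ring
  have hR (c : ℂ) : R.eval c =
      ∑ j ∈ range (a / 2 + 1),
        (-1) ^ j * (gbinom c j * gbinom (2 * c - 2 * j) (a - 2 * j)) * y ^ (2 * j) *
          x ^ (a - 2 * j) := by
    simp only [R, Q, eval_finsetSum, eval_mul, eval_C, eval_comp, eval_sub, eval_X, eval_natCast,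
      eval_ofNat, gbinom_eq_descPochhammer_eval_div]
    exact sum_congr rfl fun j _ => by ring
  have hLR : L = R := by
    refine eq_of_infinite_eval_eq L R
      (Set.infinite_of_injective_forall_mem Nat.cast_injective fun n => ?_)
    rw [Set.mem_ofPred_eq, hL, hR]
    simp only [gbinom_natCast, natCast_choose_mul_gbinom_two_mul_sub]
    exact_mod_cast sum_choose_mul_choose_mul_add_pow_mul_sub_pow n a x y
  rw [← hL, ← hR, hLR]

lemma poch_mul_gbinom_mul_gbinom_two_mul_sub (lam : ℂ) {a j : ℕ} (hj : 2 * j ≤ a) :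
    poch (lam - 1 / 2) ((a + 1) / 2) *
        (gbinom (lam - 1 + a) j * gbinom (2 * (lam - 1 + a) - 2 * j) (a - 2 * j)) =
      poch (lam + (a / 2 : ℕ)) ((a + 1) / 2) *
        (poch (lam - 1 / 2) (a - j) / ((a - 2 * j)! * j !)) * 2 ^ (a - 2 * j) := by
  set c := lam - 1 + a
  have hab : (((a + 1) / 2 : ℕ) : ℂ) + (a / 2 : ℕ) = a := by
    exact_mod_cast (by omega : (a + 1) / 2 + a / 2 = a)
  have hdup : (descPochhammer ℂ (a - 2 * j)).eval (2 * c - 2 * j) =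
      2 ^ (a - 2 * j) * (descPochhammer ℂ ((a + 1) / 2 - j)).eval (c - j) *
        (descPochhammer ℂ (a / 2 - j)).eval (c - j - 1 / 2) := by
    rw [show 2 * c - 2 * j = 2 * (c - j) by ring, descPochhammer_eval_two_mul,
      show a - 2 * j - (a - 2 * j) / 2 = (a + 1) / 2 - j by omega,
      show (a - 2 * j) / 2 = a / 2 - j by omega]
  have hhead : (descPochhammer ℂ j).eval c * (descPochhammer ℂ ((a + 1) / 2 - j)).eval (c - j) =
      poch (lam + (a / 2 : ℕ)) ((a + 1) / 2) := by
    rw [← descPochhammer_eval_add, Nat.add_sub_cancel' (by omega), descPochhammer_eval_eq_poch]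
    congr 1
    linear_combination -hab
  have htail : poch (lam - 1 / 2) ((a + 1) / 2) *
      (descPochhammer ℂ (a / 2 - j)).eval (c - j - 1 / 2) = poch (lam - 1 / 2) (a - j) := by
    have harg :
        c - j - 1 / 2 - ((a / 2 - j : ℕ) : ℂ) + 1 = lam - 1 / 2 + ((a + 1) / 2 : ℕ) := by
      rw [Nat.cast_sub (by omega : j ≤ a / 2)]
      linear_combination -hab
    rw [descPochhammer_eval_eq_poch, harg, ← poch_add,
      show (a + 1) / 2 + (a / 2 - j) = a - j by omega]
  rw [gbinom_eq_descPochhammer_eval_div, gbinom_eq_descPochhammer_eval_div, hdup, ← hhead,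
    ← htail]
  field_simp

lemma one_sub_pow_mul_jacobiP (α : ℂ) (a : ℕ) {z : ℂ} (hz : z ≠ 1) :
    (1 - z) ^ a * jacobiP α (-2 * α - 2 * a - 1) a ((3 + z) / (1 - z)) =
      (-1) ^ a * ∑ m ∈ range (a + 1),
        gbinom (α + a) m * gbinom (α + a) (a - m) * (z + 1) ^ m * (z - 1) ^ (a - m) := by
  have hz' : 1 - z ≠ 0 := sub_ne_zero.2 hz.symm
  rw [jacobiP, mul_sum, mul_sum]
  refine sum_congr rfl fun m hm => ?_
  have hma : m ≤ a := Nat.lt_succ_iff.1 (mem_range.1 hm)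
  have hfirst : poch (α + m + 1) (a - m) / (a - m)! = gbinom (α + a) (a - m) := by
    rw [poch_div_factorial, Nat.cast_sub hma]
    congr 1
    ring
  have hsecond :
      poch (α + (-2 * α - 2 * a - 1) + a + 1) m / m ! = (-1) ^ m * gbinom (α + a) m := by
    rw [← poch_neg_div_factorial]
    congr 2
    ring
  have harg : ((3 + z) / (1 - z) - 1) / 2 = (z + 1) / (1 - z) := by
    field_simp
    ring
  have hsplit : (1 - z) ^ a = (1 - z) ^ m * ((-1) ^ (a - m) * (z - 1) ^ (a - m)) := by
    rw [← mul_pow, neg_one_mul, neg_sub, ← pow_add, Nat.add_sub_cancel' hma]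
  have hsign : (-1 : ℂ) ^ a = (-1) ^ m * (-1) ^ (a - m) := by
    rw [← pow_add, Nat.add_sub_cancel' hma]
  rw [hfirst, hsecond, harg, div_pow, hsplit, hsign]
  field_simp

lemma poch_mul_sum_gbinom_eq_poch_mul_gegen (lam z : ℂ) (a : ℕ) :
    poch (lam - 1 / 2) ((a + 1) / 2) * ∑ j ∈ range (a / 2 + 1),
        (-1) ^ j * (gbinom (lam - 1 + a) j * gbinom (2 * (lam - 1 + a) - 2 * j) (a - 2 * j)) *
          z ^ (a - 2 * j) =
      poch (lam + (a / 2 : ℕ)) ((a + 1) / 2) * gegen (lam - 1 / 2) a z := by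
  rw [gegen, mul_sum, mul_sum]
  refine sum_congr rfl fun j hj => ?_
  have hterm := poch_mul_gbinom_mul_gbinom_two_mul_sub lam
    (by have := mem_range.1 hj; omega : 2 * j ≤ a)
  rw [mul_pow]
  linear_combination ((-1) ^ j * z ^ (a - 2 * j)) * hterm

end

/-- Scalar case (one-variable form): for `a ∈ ℕ`,
`(1−z)^a P^{λ−1, −2λ−2a+1}_a((3+z)/(1−z))
  = (−1)^a ((λ+[a/2])_{[(a+1)/2]}/(λ−1/2)_{[(a+1)/2]}) C^{λ−1/2}_a(z)`. -/
theorem jacobi_gegenbauer_identity_scalar (a : ℕ) (lam z : ℂ)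
    (hden : poch (lam - 1 / 2) ((a + 1) / 2) ≠ 0)
    (hz : z ≠ 1) :
    (1 - z) ^ a * jacobiP (lam - 1) (-2 * lam - 2 * a + 1) a ((3 + z) / (1 - z))
      = (-1 : ℂ) ^ a *
          (poch (lam + ((a / 2 : ℕ) : ℂ)) ((a + 1) / 2) / poch (lam - 1 / 2) ((a + 1) / 2)) *
          gegen (lam - 1 / 2) a z := by
  have hβ : -2 * lam - 2 * a + 1 = -2 * (lam - 1) - 2 * a - 1 := by ring
  rw [hβ, one_sub_pow_mul_jacobiP (lam - 1) a hz,
    sum_gbinom_mul_gbinom_mul_add_pow_mul_sub_pow (lam - 1 + a) z 1 a]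
  simp only [one_pow, mul_one]
  rw [mul_div_assoc', div_mul_eq_mul_div, eq_div_iff hden, mul_assoc _ (poch _ _),
    ← poch_mul_sum_gbinom_eq_poch_mul_gegen]
  ring
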